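/- arXiv:1808.09962 — 2 statements merged into one kernel-verified Lean document; each statement's English description precedes it below -/
import Mathlib

section
/- Let G be a connected k-uniform hypergraph with at least one edge and u ∈ V(G), and for integers p ≥ q ≥ 1 let G_u(p,q) be the hypergraph obtained from G by attaching pendant paths of lengths p and q at u. Then σ(G_u(p,q)) < σ(G_u(p+1, q−1)). -/
/-!
With `n = k - 1`, the two pendant paths of `G_u(p, q)` form one loose path `P` with `p + q`
edges on the positions `0, …, (p + q) * n`, glued to `G` by identifying `u` with the position
`p * n`. An edge of `G_u(p, q)` lies either in `G`, where it fixes the position on `P`, or in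
`P`, where it fixes the foot in `G`; hence the distance of two vertices is the `G`-distance of
their feet plus the `P`-distance of their positions. Summing over pairs, `2 σ(G_u(p, q))` is a
quantity depending only on `p + q`, plus `2 (|V(G)| - 1) σ_P(p * n)`, where `σ_P(s)` is the
transmission of the position `s` in `P`. Moving the attachment from `p * n` to `(p + 1) * n`
takes it one step away from the `p * n + 1` positions up to `p * n` and one step closer to the
`(q - 1) * n + 1` positions from `(p + 1) * n` on, so `σ_P` increases when `q ≤ p`.
-/

open Finset

/-- A (finite) hypergraph: a finite vertex set together with a finite family of edges,
each edge being a finite set of vertices. -/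
structure FinHypergraph (α : Type) where
  verts : Finset α
  edges : Finset (Finset α)

namespace FinHypergraph

variable {α β : Type}

/-- Every edge is a subset of the vertex set. -/
def Good (G : FinHypergraph α) : Prop := ∀ e ∈ G.edges, e ⊆ G.verts

/-- `k`-uniform: every edge has cardinality `k`. -/
def Uniform (G : FinHypergraph α) (k : ℕ) : Prop := ∀ e ∈ G.edges, e.card = k

/-- A walk of length `p` from `u` to `v`: an alternating sequence of vertices and edges,
with consecutive vertices distinct and both lying in the connecting edge. -/
inductive Walk (G : FinHypergraph α) : α → α → ℕ → Prop
  | nil (v : α) : Walk G v v 0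
  | cons {u w : α} (v : α) {p : ℕ} (e : Finset α) (he : e ∈ G.edges)
      (hu : u ∈ e) (hv : v ∈ e) (hne : u ≠ v) (hw : Walk G v w p) :
      Walk G u w (p + 1)

def Connected (G : FinHypergraph α) : Prop :=
  ∀ u ∈ G.verts, ∀ v ∈ G.verts, ∃ p, G.Walk u v p

/-- Distance: length of a shortest walk (equivalently, of a shortest path). -/
noncomputable def dist (G : FinHypergraph α) (u v : α) : ℕ := sInf {p | G.Walk u v p}

/-- `σ_G(u) = ∑_{v ∈ V(G)} d_G(u,v)`. -/
noncomputable def transFrom [DecidableEq α] (G : FinHypergraph α) (u : α) : ℕ :=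
  ∑ v ∈ G.verts, G.dist u v

/-- The transmission `σ(G)`: the sum of distances over all unordered pairs of
distinct vertices (distances being symmetric, this is half the sum over ordered pairs). -/
noncomputable def trans [DecidableEq α] (G : FinHypergraph α) : ℕ :=
  (∑ u ∈ G.verts, ∑ v ∈ G.verts, G.dist u v) / 2

/-- `σ_G(A,B) = ∑_{a ∈ A, b ∈ B} d_G(a,b)`. -/
noncomputable def transBetween [DecidableEq α] (G : FinHypergraph α) (A B : Finset α) : ℕ :=
  ∑ a ∈ A, ∑ b ∈ B, G.dist a b

/-- The diameter: the maximum distance between two vertices. -/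
noncomputable def diam (G : FinHypergraph α) : ℕ :=
  G.verts.sup fun u => G.verts.sup fun v => G.dist u v

/-- The degree of a vertex: the number of edges containing it. -/
def degree [DecidableEq α] (G : FinHypergraph α) (v : α) : ℕ :=
  (G.edges.filter fun e => v ∈ e).card

/-- A cycle of length `n+2` in `G`: vertices `v 0, …, v (n+1)` (all distinct) and
distinct edges `e 0, …, e (n+1)` of `G` with `v i, v (i+1) ∈ e i` (indices mod `n+2`). -/
structure Cycle (G : FinHypergraph α) where
  n : ℕ
  v : Fin (n + 2) → α
  e : Fin (n + 2) → Finset α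
  he : ∀ i, e i ∈ G.edges
  einj : Function.Injective e
  vinj : Function.Injective v
  mem_fst : ∀ i, v i ∈ e i
  mem_snd : ∀ i, v (i + 1) ∈ e i

/-- The length of a cycle (its number of edges). -/
def Cycle.length {G : FinHypergraph α} (C : G.Cycle) : ℕ := C.n + 2

/-- The set of edges of a cycle. -/
def Cycle.edgeFinset [DecidableEq α] {G : FinHypergraph α} (C : G.Cycle) : Finset (Finset α) :=
  Finset.univ.image C.e

/-- Unicyclic: connected with exactly one cycle (all cycles have the same edge set). -/
def Unicyclic [DecidableEq α] (G : FinHypergraph α) : Prop :=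
  G.Connected ∧ Nonempty G.Cycle ∧ ∀ C C' : G.Cycle, C.edgeFinset = C'.edgeFinset

/-- Isomorphism of hypergraphs. -/
def Isomorphic [DecidableEq β] (G : FinHypergraph α) (H : FinHypergraph β) : Prop :=
  ∃ f : α → β, Set.BijOn f ↑G.verts ↑H.verts ∧
    ∀ e : Finset α, e ⊆ G.verts → (e ∈ G.edges ↔ e.image f ∈ H.edges)

/-- Rename the vertices of a hypergraph along `f`. -/
def mapHG [DecidableEq β] (f : α → β) (G : FinHypergraph α) : FinHypergraph β :=
  ⟨G.verts.image f, G.edges.image (Finset.image f)⟩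

def unionHG [DecidableEq α] (G H : FinHypergraph α) : FinHypergraph α :=
  ⟨G.verts ∪ H.verts, G.edges ∪ H.edges⟩

def unionMany [DecidableEq α] {n : ℕ} (Hs : Fin n → FinHypergraph α) : FinHypergraph α :=
  ⟨Finset.univ.biUnion fun i => (Hs i).verts, Finset.univ.biUnion fun i => (Hs i).edges⟩

/-- Move the edge `e` from `u` to `x`: replace `e` by `(e \ {u}) ∪ {x}`. -/
def moveEdge [DecidableEq α] (G : FinHypergraph α) (e : Finset α) (u x : α) : FinHypergraph α :=
  ⟨G.verts, insert (insert x (e.erase u)) (G.edges.erase e)⟩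

/-- Move each edge of `S` from `u` to `x`. -/
def moveEdges [DecidableEq α] (G : FinHypergraph α) (S : Finset (Finset α)) (u x : α) :
    FinHypergraph α :=
  ⟨G.verts, (G.edges \ S) ∪ S.image fun e => insert x (e.erase u)⟩

/-- Delete a set of edges (keeping all vertices). -/
def deleteEdges [DecidableEq α] (G : FinHypergraph α) (S : Finset (Finset α)) : FinHypergraph α :=
  ⟨G.verts, G.edges \ S⟩

open Classical in
/-- The vertex set of the component of `G` containing `u`. -/
noncomputable def component (G : FinHypergraph α) (u : α) : Finset α :=
  G.verts.filter fun x => ∃ p, G.Walk u x p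

/-- The component of `G` containing `u`, as a hypergraph. -/
noncomputable def componentHG [DecidableEq α] (G : FinHypergraph α) (u : α) : FinHypergraph α :=
  ⟨G.component u, G.edges.filter fun e => e ⊆ G.component u⟩

/-- The `k`-uniform loose cycle with `m` edges `e_0, …, e_{m-1}`,
consecutive edges sharing exactly one vertex. -/
def looseCycle (m k : ℕ) : FinHypergraph ℕ where
  verts := Finset.range (m * (k - 1))
  edges := (Finset.range m).image fun i =>
    (Finset.range k).image fun j => (i * (k - 1) + j) % (m * (k - 1))

/-- `C^k_2(t,s)`: two `k`-edges sharing exactly the two vertices `0,1`, with a hyperstar of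
`t` edges attached at `0` and a hyperstar of `s` edges attached at `1`. -/
def Ck2 (k t s : ℕ) : FinHypergraph ℕ where
  verts := Finset.range ((t + s + 2) * (k - 1))
  edges :=
    {Finset.range k, insert 0 (insert 1 (Finset.Ico k (2 * k - 2)))} ∪
    ((Finset.range t).image fun i =>
      insert 0 (Finset.Ico (2 * k - 2 + i * (k - 1)) (2 * k - 2 + (i + 1) * (k - 1)))) ∪
    ((Finset.range s).image fun j =>
      insert 1 (Finset.Ico (2 * k - 2 + t * (k - 1) + j * (k - 1))
        (2 * k - 2 + t * (k - 1) + (j + 1) * (k - 1))))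

/-- `C̃^k_2(p,q)`: the loose 2-cycle on the two `k`-edges `{0,…,k-1}` and
`{0,1} ∪ {k,…,2k-3}` (sharing exactly `0,1`), with a pendant path of length `p`
attached at the degree-one vertex `2` of the first edge and a pendant path of length `q`
attached at the degree-one vertex `k` of the second edge. -/
def Ctilde (k p q : ℕ) : FinHypergraph ℕ where
  verts := Finset.range ((p + q + 2) * (k - 1))
  edges :=
    {Finset.range k, insert 0 (insert 1 (Finset.Ico k (2 * k - 2)))} ∪
    ((Finset.range p).image fun i =>
      insert (if i = 0 then 2 else 2 * k - 2 + i * (k - 1) - 1)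
        (Finset.Ico (2 * k - 2 + i * (k - 1)) (2 * k - 2 + (i + 1) * (k - 1)))) ∪
    ((Finset.range q).image fun j =>
      insert (if j = 0 then k else 2 * k - 2 + p * (k - 1) + j * (k - 1) - 1)
        (Finset.Ico (2 * k - 2 + p * (k - 1) + j * (k - 1))
          (2 * k - 2 + p * (k - 1) + (j + 1) * (k - 1))))

/-- The triangle with one pendant edge, `C^2_3(1,0,0)`. -/
def triPendant : FinHypergraph ℕ :=
  ⟨Finset.range 4, {{0, 1}, {1, 2}, {0, 2}, {0, 3}}⟩

/-- `G_{u,v}(p,q)`: attach a loose pendant path of `p` `k`-edges at `u` and a loose pendant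
path of `q` `k`-edges at `v`, using fresh vertices (the `Sum.inr` side). -/
def attachTwoPathsAt [DecidableEq α] (k : ℕ) (G : FinHypergraph α) (u v : α) (p q : ℕ) :
    FinHypergraph (α ⊕ ℕ) where
  verts := G.verts.image Sum.inl ∪ (Finset.range ((p + q) * (k - 1))).image Sum.inr
  edges :=
    G.edges.image (Finset.image Sum.inl) ∪
    ((Finset.range p).image fun i =>
      insert (if i = 0 then Sum.inl u else Sum.inr (i * (k - 1) - 1))
        ((Finset.Ico (i * (k - 1)) ((i + 1) * (k - 1))).image Sum.inr)) ∪
    ((Finset.range q).image fun j =>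
      insert (if j = 0 then Sum.inl v else Sum.inr (p * (k - 1) + j * (k - 1) - 1))
        ((Finset.Ico (p * (k - 1) + j * (k - 1)) (p * (k - 1) + (j + 1) * (k - 1))).image
          Sum.inr))

/-- `G_u(p,q)`: attach two loose pendant paths, of lengths `p` and `q`, at `u`. -/
def attachTwoPaths [DecidableEq α] (k : ℕ) (G : FinHypergraph α) (u : α) (p q : ℕ) :
    FinHypergraph (α ⊕ ℕ) :=
  attachTwoPathsAt k G u u p q

/-- `G_{e,s}(H_1,…,H_{k-1})`: given a pendant edge `e = {w 0, …, w (k-1)}` of `G` at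
`w (k-1)`, identify the root `vr i` of `H i` with `w (k-1)` for (0-based) `i < s`, and with
`w i` for `i ≥ s`. -/
def Ges [DecidableEq α] (G : FinHypergraph α) (k : ℕ) (hk : 2 ≤ k) (w : Fin k → α)
    (H : Fin (k - 1) → FinHypergraph α) (vr : Fin (k - 1) → α) (s : ℕ) : FinHypergraph α :=
  unionHG G (unionMany fun i : Fin (k - 1) =>
    mapHG (Function.update id (vr i)
      (if (i : ℕ) < s then w ⟨k - 1, by omega⟩ else w (Fin.castLE (Nat.sub_le k 1) i))) (H i))

theorem Walk.append {G : FinHypergraph α} {a b c : α} {s t : ℕ}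
    (h₁ : G.Walk a b s) (h₂ : G.Walk b c t) : G.Walk a c (s + t) := by
  induction h₁ with
  | nil => simpa using h₂
  | cons v e he ha hv hne _ ih =>
    rw [Nat.add_right_comm]
    exact .cons v e he ha hv hne (ih h₂)

theorem Walk.single {G : FinHypergraph α} {a b : α} {e : Finset α} (he : e ∈ G.edges)
    (ha : a ∈ e) (hb : b ∈ e) (hab : a ≠ b) : G.Walk a b 1 :=
  .cons b e he ha hb hab (.nil b)

theorem Walk.reverse {G : FinHypergraph α} {a b : α} {s : ℕ} (h : G.Walk a b s) :
    G.Walk b a s := by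
  induction h with
  | nil v => exact .nil v
  | cons v e he ha hv hne _ ih => exact ih.append (.single he hv ha hne.symm)

theorem Walk.map [DecidableEq β] {G : FinHypergraph α} {H : FinHypergraph β} {f : α → β}
    (hf : Function.Injective f) (hE : ∀ e ∈ G.edges, e.image f ∈ H.edges)
    {a b : α} {s : ℕ} (h : G.Walk a b s) : H.Walk (f a) (f b) s := by
  induction h with
  | nil v => exact .nil (f v)
  | cons v e he ha hv hne _ ih =>
    exact .cons (f v) _ (hE e he) (mem_image_of_mem f ha) (mem_image_of_mem f hv)
      (hf.ne hne) ih

theorem Walk.le_length_of_lipschitz {G : FinHypergraph α} {D : α → ℕ} {a b : α} {s : ℕ}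
    (hb : D b = 0) (hD : ∀ e ∈ G.edges, ∀ x ∈ e, ∀ y ∈ e, D x ≤ D y + 1)
    (h : G.Walk a b s) : D a ≤ s := by
  induction h with
  | nil => omega
  | cons v e he ha hv _ _ ih => have := hD e he _ ha v hv; omega

theorem dist_le_of_walk {G : FinHypergraph α} {a b : α} {s : ℕ} (h : G.Walk a b s) :
    G.dist a b ≤ s :=
  Nat.sInf_le h

theorem walk_dist {G : FinHypergraph α} {a b : α} {s : ℕ} (h : G.Walk a b s) :
    G.Walk a b (G.dist a b) :=
  Nat.sInf_mem ⟨s, h⟩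

theorem dist_self_eq_zero (G : FinHypergraph α) (a : α) : G.dist a a = 0 :=
  Nat.le_zero.mp (dist_le_of_walk (.nil a))

theorem dist_le_dist_add_one {G : FinHypergraph α} {a b c : α} {e : Finset α} {s : ℕ}
    (he : e ∈ G.edges) (ha : a ∈ e) (hb : b ∈ e) (h : G.Walk b c s) :
    G.dist a c ≤ G.dist b c + 1 := by
  rcases eq_or_ne a b with rfl | hab
  · omega
  · simpa [add_comm] using dist_le_of_walk ((Walk.single he ha hb hab).append (walk_dist h))

theorem dist_eq_of_lipschitz {G : FinHypergraph α} {D : α → ℕ} {a b : α}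
    (hw : G.Walk a b (D a)) (hb : D b = 0)
    (hD : ∀ e ∈ G.edges, ∀ x ∈ e, ∀ y ∈ e, D x ≤ D y + 1) : G.dist a b = D a :=
  le_antisymm (dist_le_of_walk hw) ((walk_dist hw).le_length_of_lipschitz hb hD)

section PathDist

variable {n c s t : ℕ}

/-- The distance between the positions `s` and `t` of a loose path whose `c`-th edge consists
of the positions `c * n, …, (c + 1) * n`. -/
def pathDist (n s t : ℕ) : ℕ :=
  if s = t then 0 else if s < t then t ⌈/⌉ n - s / n else s ⌈/⌉ n - t / n

theorem pathDist_self (n s : ℕ) : pathDist n s s = 0 := if_pos rfl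

theorem pathDist_comm (n s t : ℕ) : pathDist n s t = pathDist n t s := by
  unfold pathDist
  split_ifs <;> subst_vars <;> omega

theorem mul_ceilDiv_self (hn : 0 < n) (c : ℕ) : c * n ⌈/⌉ n = c := by
  simpa [mul_comm] using smul_ceilDiv hn c

theorem div_ceilDiv_cases (hn : 0 < n) (h₁ : c * n ≤ s) (h₂ : s ≤ (c + 1) * n) :
    (s = c * n ∧ s / n = c ∧ s ⌈/⌉ n = c) ∨ (s = (c + 1) * n ∧ s / n = c + 1 ∧ s ⌈/⌉ n = c + 1) ∨
      (c * n < s ∧ s < (c + 1) * n ∧ s / n = c ∧ s ⌈/⌉ n = c + 1) := by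
  rcases h₁.eq_or_lt with rfl | h₁
  · exact .inl ⟨rfl, Nat.mul_div_cancel c hn, mul_ceilDiv_self hn c⟩
  rcases h₂.eq_or_lt with rfl | h₂
  · exact .inr (.inl ⟨rfl, Nat.mul_div_cancel _ hn, mul_ceilDiv_self hn _⟩)
  refine .inr (.inr ⟨h₁, h₂, ?_, ?_⟩)
  · exact le_antisymm (Nat.lt_succ_iff.mp ((Nat.div_lt_iff_lt_mul hn).2 h₂))
      ((Nat.le_div_iff_mul_le hn).2 h₁.le)
  · refine le_antisymm ((ceilDiv_le_iff_le_mul hn).2 (by rw [mul_comm]; exact h₂.le)) ?_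
    rw [Nat.succ_le_iff, ← not_le, ceilDiv_le_iff_le_mul hn, mul_comm]
    exact not_le.2 h₁

theorem div_le_div_and_ceilDiv_of_lt (hn : 0 < n) (h : s < t) :
    s / n ≤ t / n ∧ s ⌈/⌉ n ≤ t ⌈/⌉ n ∧ s / n < t ⌈/⌉ n := by
  refine ⟨Nat.div_le_div_right h.le, (gc_mul_ceilDiv hn).monotone_l h.le, ?_⟩
  have hs : n * (s / n) ≤ s := Nat.mul_div_le s n
  have ht : t ≤ n * (t ⌈/⌉ n) := (ceilDiv_le_iff_le_mul hn).1 le_rfl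
  exact Nat.lt_of_mul_lt_mul_left (a := n) (by omega)

theorem pathDist_le_pathDist_add_one (hn : 0 < n) {s' : ℕ} (hs₁ : c * n ≤ s)
    (hs₂ : s ≤ (c + 1) * n) (hs'₁ : c * n ≤ s') (hs'₂ : s' ≤ (c + 1) * n) (t : ℕ) :
    pathDist n s t ≤ pathDist n s' t + 1 := by
  have hs := div_ceilDiv_cases hn hs₁ hs₂
  have hs' := div_ceilDiv_cases hn hs'₁ hs'₂
  have hst := fun h : s < t => div_le_div_and_ceilDiv_of_lt hn h
  have hts := fun h : t < s => div_le_div_and_ceilDiv_of_lt hn h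
  have hs't := fun h : s' < t => div_le_div_and_ceilDiv_of_lt hn h
  have hts' := fun h : t < s' => div_le_div_and_ceilDiv_of_lt hn h
  have : (c + 1) * n = c * n + n := Nat.succ_mul c n
  unfold pathDist
  split_ifs <;> subst_vars <;> omega

theorem pathDist_succ_mul_add_ite (hn : 0 < n) (a t : ℕ) :
    pathDist n ((a + 1) * n) t + (if (a + 1) * n ≤ t then 1 else 0) =
      pathDist n (a * n) t + (if t ≤ a * n then 1 else 0) := by
  have ha := mul_ceilDiv_self hn a
  have ha' := mul_ceilDiv_self hn (a + 1)
  have hda := Nat.mul_div_cancel a hn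
  have hda' := Nat.mul_div_cancel (a + 1) hn
  have h₁ := fun h : t < a * n => div_le_div_and_ceilDiv_of_lt hn h
  have h₂ := fun h : a * n < t => div_le_div_and_ceilDiv_of_lt hn h
  have h₃ := fun h : t < (a + 1) * n => div_le_div_and_ceilDiv_of_lt hn h
  have h₄ := fun h : (a + 1) * n < t => div_le_div_and_ceilDiv_of_lt hn h
  have : (a + 1) * n = a * n + n := Nat.succ_mul a n
  unfold pathDist
  split_ifs <;> subst_vars <;> omega

end PathDist

def pathTransFrom (n M s : ℕ) : ℕ := ∑ t ∈ range (M * n + 1), pathDist n s t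

theorem pathTransFrom_lt_succ_mul {n M a : ℕ} (hn : 0 < n) (ha : a < M) (hM : M ≤ 2 * a) :
    pathTransFrom n M (a * n) < pathTransFrom n M ((a + 1) * n) := by
  have key := sum_congr (s₁ := range (M * n + 1)) rfl fun t _ => pathDist_succ_mul_add_ite hn a t
  rw [sum_add_distrib, sum_add_distrib, ← card_filter, ← card_filter] at key
  have hM' : (a + 1) * n ≤ M * n := Nat.mul_le_mul_right n ha
  have hM'' : M * n < (2 * a + 1) * n := Nat.mul_lt_mul_of_pos_right (by omega) hn
  have : (2 * a + 1) * n = a * n + (a + 1) * n := by ring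
  have : (a + 1) * n = a * n + n := Nat.succ_mul a n
  have hright : (range (M * n + 1)).filter (fun t => (a + 1) * n ≤ t) =
      Ico ((a + 1) * n) (M * n + 1) := by
    ext t; simp only [mem_filter, mem_range, mem_Ico]; omega
  have hleft : (range (M * n + 1)).filter (fun t => t ≤ a * n) = range (a * n + 1) := by
    ext t; simp only [mem_filter, mem_range]; omega
  rw [hright, hleft, Nat.card_Ico, card_range] at key
  unfold pathTransFrom
  omega

def IsLoosePath (W : FinHypergraph β) (n M : ℕ) (f : ℕ → β) : Prop :=
  Function.Injective f ∧ ∀ c < M, ∃ e ∈ W.edges, ∀ s, c * n ≤ s → s ≤ (c + 1) * n → f s ∈ e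

namespace IsLoosePath

variable {W : FinHypergraph β} {n M : ℕ} {f : ℕ → β}

theorem walk_of_mem_edge (hf : W.IsLoosePath n M f) {c s t : ℕ} (hc : c < M)
    (hs₁ : c * n ≤ s) (hs₂ : s ≤ (c + 1) * n) (ht₁ : c * n ≤ t) (ht₂ : t ≤ (c + 1) * n)
    (hst : s ≠ t) : W.Walk (f s) (f t) 1 := by
  obtain ⟨e, he, hfe⟩ := hf.2 c hc
  exact .single he (hfe s hs₁ hs₂) (hfe t ht₁ ht₂) (hf.1.ne hst)

theorem walk_mul_mul (hf : W.IsLoosePath n M f) (hn : 0 < n) {a b : ℕ} (hab : a ≤ b)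
    (hb : b ≤ M) : W.Walk (f (a * n)) (f (b * n)) (b - a) := by
  induction b, hab using Nat.le_induction with
  | base => simpa using Walk.nil (f (a * n))
  | succ b hab ih =>
    have hb' : (b + 1) * n = b * n + n := Nat.succ_mul b n
    have step := hf.walk_of_mem_edge (c := b) (by omega) le_rfl (by omega) (by omega) le_rfl
      (by omega)
    rw [show b + 1 - a = b - a + 1 by omega]
    exact (ih (by omega)).append step

theorem walk_mul_of_le (hf : W.IsLoosePath n M f) (hn : 0 < n) {a t : ℕ} (ha : a * n ≤ t)
    (ht : t ≤ M * n) : W.Walk (f (a * n)) (f t) (t ⌈/⌉ n - a) := by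
  have hat : a ≤ t / n := (Nat.le_div_iff_mul_le hn).2 ha
  have htM : t / n ≤ M := by simpa [Nat.mul_div_cancel M hn] using Nat.div_le_div_right (c := n) ht
  rcases div_ceilDiv_cases hn (Nat.div_mul_le_self t n)
      ((Nat.div_lt_iff_lt_mul hn).1 (Nat.lt_add_one _)).le with
    ⟨hanchor, -, hceil⟩ | ⟨hlast, -⟩ | ⟨h₁, h₂, -, hceil⟩
  · have w := hf.walk_mul_mul hn hat htM
    rwa [← hanchor, ← hceil] at w
  · have := (Nat.div_lt_iff_lt_mul hn).1 (Nat.lt_add_one (t / n))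
    omega
  · have hc : t / n < M := Nat.lt_of_mul_lt_mul_right (a := n) (by omega)
    have w := (hf.walk_mul_mul hn hat htM).append
      (hf.walk_of_mem_edge hc le_rfl (by omega) h₁.le h₂.le h₁.ne)
    rw [hceil]
    rwa [show t / n - a + 1 = t / n + 1 - a by omega] at w

theorem walk_of_lt (hf : W.IsLoosePath n M f) (hn : 0 < n) {s t : ℕ} (hst : s < t)
    (ht : t ≤ M * n) : W.Walk (f s) (f t) (t ⌈/⌉ n - s / n) := by
  have hc' : (s / n + 1) * n = s / n * n + n := Nat.succ_mul _ n
  rcases div_ceilDiv_cases hn (Nat.div_mul_le_self s n)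
      ((Nat.div_lt_iff_lt_mul hn).1 (Nat.lt_add_one _)).le with
    ⟨hanchor, -⟩ | ⟨hlast, -⟩ | ⟨h₁, h₂, -, hceil⟩
  · have w := hf.walk_mul_of_le hn (a := s / n) (by omega) ht
    rwa [← hanchor] at w
  · have := (Nat.div_lt_iff_lt_mul hn).1 (Nat.lt_add_one (s / n))
    omega
  have hc : s / n < M := Nat.lt_of_mul_lt_mul_right (a := n) (by omega)
  by_cases htc : t ≤ (s / n + 1) * n
  · have hceil_t : t ⌈/⌉ n = s / n + 1 := by
      rcases div_ceilDiv_cases hn (c := s / n) (by omega) htc with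
        ⟨h, -⟩ | ⟨-, -, h⟩ | ⟨-, -, -, h⟩ <;> omega
    rw [hceil_t, Nat.add_sub_cancel_left]
    exact hf.walk_of_mem_edge hc h₁.le h₂.le (by omega) htc hst.ne
  · have hlt := (div_le_div_and_ceilDiv_of_lt hn (not_le.1 htc)).2.2
    rw [Nat.mul_div_cancel _ hn] at hlt
    have w := (hf.walk_of_mem_edge hc h₁.le h₂.le (by omega) le_rfl h₂.ne).append
      (hf.walk_mul_of_le hn (not_le.1 htc).le ht)
    rwa [show 1 + (t ⌈/⌉ n - (s / n + 1)) = t ⌈/⌉ n - s / n by omega] at w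

theorem walk (hf : W.IsLoosePath n M f) (hn : 0 < n) {s t : ℕ} (hs : s ≤ M * n)
    (ht : t ≤ M * n) : W.Walk (f s) (f t) (pathDist n s t) := by
  unfold pathDist
  split_ifs with h h'
  · subst h; exact .nil _
  · exact hf.walk_of_lt hn h' ht
  · exact (hf.walk_of_lt hn (by omega) hs).reverse

end IsLoosePath

/-- Read from the far end of the `p`-path, the two pendant paths form one loose path with
`p + q` edges on the positions `0, …, (p + q) * n`, passing through `u` at position `p * n`. -/
def spineVertex (u : α) (n p s : ℕ) : α ⊕ ℕ :=
  if s = p * n then .inl u else if s < p * n then .inr (p * n - 1 - s) else .inr (s - 1)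

def spinePos (n p : ℕ) : α ⊕ ℕ → ℕ :=
  Sum.elim (fun _ => p * n) fun t => if t < p * n then p * n - 1 - t else t + 1

def baseProj (u : α) : α ⊕ ℕ → α := Sum.elim id fun _ => u

theorem spineVertex_mul_self (u : α) (n p : ℕ) : spineVertex u n p (p * n) = .inl u :=
  if_pos rfl

theorem spineVertex_of_lt {u : α} {n p s : ℕ} (h : s < p * n) :
    spineVertex u n p s = .inr (p * n - 1 - s) := by
  rw [spineVertex, if_neg h.ne, if_pos h]

theorem spineVertex_of_gt {u : α} {n p s : ℕ} (h : p * n < s) :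
    spineVertex u n p s = .inr (s - 1) := by
  rw [spineVertex, if_neg h.ne', if_neg h.not_gt]

theorem spinePos_inl (n p : ℕ) (a : α) : spinePos n p (.inl a) = p * n := rfl

theorem baseProj_inl (u a : α) : baseProj u (.inl a : α ⊕ ℕ) = a := rfl

theorem spinePos_spineVertex (u : α) (n p s : ℕ) : spinePos n p (spineVertex u n p s) = s := by
  unfold spineVertex spinePos
  split_ifs <;> simp only [Sum.elim_inl, Sum.elim_inr] <;> grind

theorem baseProj_spineVertex (u : α) (n p s : ℕ) : baseProj u (spineVertex u n p s) = u := by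
  unfold spineVertex
  split_ifs <;> rfl

section AttachTwoPaths

variable [DecidableEq α] {G : FinHypergraph α} {u : α} {n p q : ℕ}

theorem verts_attachTwoPaths : (attachTwoPaths (n + 1) G u p q).verts =
    G.verts.image .inl ∪ (range ((p + q) * n)).image .inr := by
  simp [attachTwoPaths, attachTwoPathsAt]

theorem mem_edges_attachTwoPaths (hn : 0 < n) {e : Finset (α ⊕ ℕ)}
    (he : e ∈ (attachTwoPaths (n + 1) G u p q).edges) :
    (∃ e₀ ∈ G.edges, e = e₀.image .inl) ∨
      ∃ c, ∀ x ∈ e, baseProj u x = u ∧ c * n ≤ spinePos n p x ∧ spinePos n p x ≤ (c + 1) * n := by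
  simp only [attachTwoPaths, attachTwoPathsAt, Nat.add_sub_cancel, mem_union, mem_image,
    mem_range] at he
  rcases he with (⟨e₀, he₀, rfl⟩ | ⟨i, hi, rfl⟩) | ⟨j, hj, rfl⟩
  · exact .inl ⟨e₀, he₀, rfl⟩
  · obtain ⟨c, rfl⟩ : ∃ c, p = c + i + 1 := ⟨p - 1 - i, by omega⟩
    refine .inr ⟨c, fun x hx => ?_⟩
    have hi0 : i = 0 ∧ i * n = 0 ∨ 0 < i ∧ n ≤ i * n := by
      rcases Nat.eq_zero_or_pos i with rfl | h
      exacts [.inl ⟨rfl, zero_mul n⟩, .inr ⟨h, Nat.le_mul_of_pos_left n h⟩]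
    simp only [mem_insert, mem_image, mem_Ico] at hx
    simp only [spinePos, baseProj, add_mul, one_mul] at hx ⊢
    generalize c * n = C at *
    generalize i * n = I at *
    rcases hx with rfl | ⟨t, ht, rfl⟩
    · split_ifs <;> simp only [Sum.elim_inl, Sum.elim_inr, id_eq, true_and] <;>
        (try split_ifs) <;> omega
    · simp only [Sum.elim_inr, true_and]
      split_ifs <;> omega
  · refine .inr ⟨p + j, fun x hx => ?_⟩
    have hj0 : j = 0 ∧ j * n = 0 ∨ 0 < j ∧ n ≤ j * n := by
      rcases Nat.eq_zero_or_pos j with rfl | h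
      exacts [.inl ⟨rfl, zero_mul n⟩, .inr ⟨h, Nat.le_mul_of_pos_left n h⟩]
    simp only [mem_insert, mem_image, mem_Ico] at hx
    simp only [spinePos, baseProj, add_mul, one_mul] at hx ⊢
    generalize p * n = P at *
    generalize j * n = J at *
    rcases hx with rfl | ⟨t, ht, rfl⟩
    · split_ifs <;> simp only [Sum.elim_inl, Sum.elim_inr, id_eq, true_and] <;>
        (try split_ifs) <;> omega
    · simp only [Sum.elim_inr, true_and]
      split_ifs <;> omega

theorem isLoosePath_spineVertex (hn : 0 < n) :
    (attachTwoPaths (n + 1) G u p q).IsLoosePath n (p + q) (spineVertex u n p) := by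
  refine ⟨Function.LeftInverse.injective (spinePos_spineVertex u n p), fun c hc => ?_⟩
  simp only [attachTwoPaths, attachTwoPathsAt, Nat.add_sub_cancel]
  rcases lt_or_ge c p with hcp | hcp
  · obtain ⟨i, rfl⟩ : ∃ i, p = c + i + 1 := ⟨p - 1 - c, by omega⟩
    refine ⟨_, mem_union_left _ (mem_union_right _ (mem_image_of_mem _ (mem_range.2
      (show i < c + i + 1 by omega)))), fun s hs₁ hs₂ => ?_⟩
    have hp : (c + i + 1) * n = c * n + i * n + n := by ring
    have := add_one_mul c n
    have := add_one_mul i n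
    rcases hs₂.eq_or_lt with rfl | hs₂
    · rcases Nat.eq_zero_or_pos i with rfl | hi
      · simp [spineVertex_mul_self]
      have := Nat.le_mul_of_pos_left n hi
      rw [spineVertex_of_lt (by omega), if_neg hi.ne']
      convert mem_insert_self _ _ using 2
      omega
    · rw [spineVertex_of_lt (by omega)]
      exact mem_insert_of_mem (mem_image_of_mem _ (mem_Ico.2 ⟨by omega, by omega⟩))
  · obtain ⟨j, rfl⟩ : ∃ j, c = p + j := ⟨c - p, by omega⟩
    refine ⟨_, mem_union_right _ (mem_image_of_mem _ (mem_range.2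
      (show j < q by omega))), fun s hs₁ hs₂ => ?_⟩
    have := add_mul p j n
    have := add_one_mul (p + j) n
    have := add_one_mul j n
    rcases hs₁.eq_or_lt' with rfl | hs₁
    · rcases Nat.eq_zero_or_pos j with rfl | hj
      · simp [spineVertex_mul_self]
      have := Nat.le_mul_of_pos_left n hj
      rw [spineVertex_of_gt (by omega), if_neg hj.ne']
      convert mem_insert_self _ _ using 2
      omega
    · rw [spineVertex_of_gt (by omega)]
      exact mem_insert_of_mem (mem_image_of_mem _ (mem_Ico.2 ⟨by omega, by omega⟩))

theorem mem_verts_attachTwoPaths {x : α ⊕ ℕ} (hx : x ∈ (attachTwoPaths (n + 1) G u p q).verts) :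
    (∃ a ∈ G.verts, x = .inl a) ∨ ∃ s ≤ (p + q) * n, x = spineVertex u n p s := by
  rw [verts_attachTwoPaths, mem_union, mem_image, mem_image] at hx
  rcases hx with ⟨a, ha, rfl⟩ | ⟨t, ht, rfl⟩
  · exact .inl ⟨a, ha, rfl⟩
  · have := mem_range.1 ht
    have := add_mul p q n
    refine .inr ⟨spinePos n p (.inr t : α ⊕ ℕ), ?_, ?_⟩ <;> simp only [spinePos, Sum.elim_inr]
    · split_ifs <;> omega
    · split_ifs with h
      · rw [spineVertex_of_lt (by omega)]; congr 1; omega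
      · rw [spineVertex_of_gt (by omega), Nat.add_sub_cancel]

theorem baseProj_mem (hu : u ∈ G.verts) {x : α ⊕ ℕ}
    (hx : x ∈ (attachTwoPaths (n + 1) G u p q).verts) : baseProj u x ∈ G.verts := by
  rcases mem_verts_attachTwoPaths hx with ⟨a, ha, rfl⟩ | ⟨s, -, rfl⟩
  exacts [ha, (baseProj_spineVertex u n p s).symm ▸ hu]

theorem image_inl_mem_edges {e : Finset α} (he : e ∈ G.edges) :
    e.image .inl ∈ (attachTwoPaths (n + 1) G u p q).edges := by
  simp only [attachTwoPaths, attachTwoPathsAt]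
  exact mem_union_left _ (mem_union_left _ (mem_image_of_mem _ he))

theorem dist_attachTwoPaths (hn : 0 < n) (hgood : G.Good) (hconn : G.Connected)
    (hu : u ∈ G.verts) {x y : α ⊕ ℕ} (hx : x ∈ (attachTwoPaths (n + 1) G u p q).verts)
    (hy : y ∈ (attachTwoPaths (n + 1) G u p q).verts) :
    (attachTwoPaths (n + 1) G u p q).dist x y =
      G.dist (baseProj u x) (baseProj u y) + pathDist n (spinePos n p x) (spinePos n p y) := by
  have hspine := isLoosePath_spineVertex (G := G) (u := u) (p := p) (q := q) hn
  have hG : ∀ {a b}, a ∈ G.verts → b ∈ G.verts →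
      (attachTwoPaths (n + 1) G u p q).Walk (.inl a) (.inl b) (G.dist a b) := fun ha hb =>
    (walk_dist (hconn _ ha _ hb).choose_spec).map Sum.inl_injective fun _ => image_inl_mem_edges
  have hpn := Nat.mul_le_mul_right n (Nat.le_add_right p q)
  refine dist_eq_of_lipschitz (D := fun z =>
      G.dist (baseProj u z) (baseProj u y) + pathDist n (spinePos n p z) (spinePos n p y)) ?_
    (by rw [dist_self_eq_zero, pathDist_self]) ?_
  · rcases mem_verts_attachTwoPaths hx with ⟨a, ha, rfl⟩ | ⟨s, hs, rfl⟩ <;>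
      rcases mem_verts_attachTwoPaths hy with ⟨b, hb, rfl⟩ | ⟨t, ht, rfl⟩ <;>
      simp only [baseProj_inl, spinePos_inl, baseProj_spineVertex, spinePos_spineVertex,
        pathDist_self, add_zero, dist_self_eq_zero, zero_add]
    · exact hG ha hb
    · have w := hspine.walk hn hpn ht
      rw [spineVertex_mul_self] at w
      exact (hG ha hu).append w
    · have w := hspine.walk hn hs hpn
      rw [spineVertex_mul_self] at w
      rw [Nat.add_comm (G.dist u b)]
      exact w.append (hG hu hb)
    · exact hspine.walk hn hs ht
  · intro e he x hxe v hve
    rcases mem_edges_attachTwoPaths hn he with ⟨e₀, he₀, rfl⟩ | ⟨c, hc⟩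
    · obtain ⟨a, ha, rfl⟩ := mem_image.1 hxe
      obtain ⟨b, hb, rfl⟩ := mem_image.1 hve
      have := dist_le_dist_add_one he₀ ha hb
        (hconn _ (hgood _ he₀ hb) _ (baseProj_mem hu hy)).choose_spec
      simp only [baseProj_inl, spinePos_inl]
      omega
    · obtain ⟨hx₀, hx₁, hx₂⟩ := hc x hxe
      obtain ⟨hv₀, hv₁, hv₂⟩ := hc v hve
      rw [hx₀, hv₀]
      have := pathDist_le_pathDist_add_one hn hx₁ hx₂ hv₁ hv₂ (spinePos n p y)
      omega

theorem sum_spinePos {N : ℕ} (hN : #G.verts = N + 1) (F : ℕ → ℕ) :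
    ∑ x ∈ (attachTwoPaths (n + 1) G u p q).verts, F (spinePos n p x) =
      N * F (p * n) + ∑ s ∈ range ((p + q) * n + 1), F s := by
  have hpn := Nat.mul_le_mul_right n (Nat.le_add_right p q)
  have hspine : ∑ t ∈ range ((p + q) * n), F (spinePos n p (.inr t : α ⊕ ℕ)) =
      ∑ s ∈ (range ((p + q) * n + 1)).erase (p * n), F s := by
    refine sum_nbij' (fun t => spinePos n p (.inr t : α ⊕ ℕ))
      (fun s => if s < p * n then p * n - 1 - s else s - 1) ?_ ?_ ?_ ?_ (fun _ _ => rfl) <;>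
      intro s hs <;> simp only [mem_range, mem_erase, spinePos, Sum.elim_inr] at hs ⊢ <;>
      split_ifs <;> omega
  rw [verts_attachTwoPaths, sum_union (disjoint_left.2 (by simp)),
    sum_image (Sum.inl_injective.injOn), sum_image (Sum.inr_injective.injOn), hspine,
    ← add_sum_erase _ _ (mem_range.2 (Nat.lt_succ_of_le hpn))]
  simp only [spinePos_inl, sum_const, hN, smul_eq_mul]
  ring

theorem sum_sum_pathDist_spinePos {N : ℕ} (hN : #G.verts = N + 1) :
    ∑ x ∈ (attachTwoPaths (n + 1) G u p q).verts, ∑ y ∈ (attachTwoPaths (n + 1) G u p q).verts,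
      pathDist n (spinePos n p x) (spinePos n p y) =
      ∑ s ∈ range ((p + q) * n + 1), ∑ t ∈ range ((p + q) * n + 1), pathDist n s t +
        2 * (N * pathTransFrom n (p + q) (p * n)) := by
  calc _ = ∑ x ∈ (attachTwoPaths (n + 1) G u p q).verts,
        (N * pathDist n (spinePos n p x) (p * n) +
          ∑ t ∈ range ((p + q) * n + 1), pathDist n (spinePos n p x) t) :=
        sum_congr rfl fun x _ => sum_spinePos hN _
    _ = N * ∑ x ∈ (attachTwoPaths (n + 1) G u p q).verts, pathDist n (spinePos n p x) (p * n) +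
        ∑ t ∈ range ((p + q) * n + 1),
          ∑ x ∈ (attachTwoPaths (n + 1) G u p q).verts, pathDist n (spinePos n p x) t := by
        rw [sum_add_distrib, mul_sum, sum_comm]
    _ = _ := by
        rw [sum_spinePos hN (pathDist n · (p * n)),
          sum_congr rfl fun t _ => sum_spinePos hN (pathDist n · t),
          sum_add_distrib, sum_comm (s := range _) (t := range _), pathTransFrom, pathDist_self]
        simp only [pathDist_comm n _ (p * n), ← mul_sum]
        ring

theorem sum_dist_attachTwoPaths (hn : 0 < n) (hgood : G.Good) (hconn : G.Connected)
    (hu : u ∈ G.verts) {N : ℕ} (hN : #G.verts = N + 1) :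
    ∑ x ∈ (attachTwoPaths (n + 1) G u p q).verts, ∑ y ∈ (attachTwoPaths (n + 1) G u p q).verts,
      (attachTwoPaths (n + 1) G u p q).dist x y =
      ∑ x ∈ (attachTwoPaths (n + 1) G u p q).verts, ∑ y ∈ (attachTwoPaths (n + 1) G u p q).verts,
        G.dist (baseProj u x) (baseProj u y) +
      (∑ s ∈ range ((p + q) * n + 1), ∑ t ∈ range ((p + q) * n + 1), pathDist n s t +
        2 * (N * pathTransFrom n (p + q) (p * n))) := by
  rw [← sum_sum_pathDist_spinePos hN, ← sum_add_distrib]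
  refine sum_congr rfl fun x hx => ?_
  rw [← sum_add_distrib]
  exact sum_congr rfl fun y hy => dist_attachTwoPaths hn hgood hconn hu hx hy

end AttachTwoPaths

end FinHypergraph

open FinHypergraph

/-- Lemma `max-moving1`: For a connected `k`-uniform hypergraph `G` with at
least one edge, `u ∈ V(G)`, and integers `p ≥ q ≥ 1`,
`σ(G_u(p,q)) < σ(G_u(p+1,q-1))`. -/
theorem stmt12 {α : Type} [DecidableEq α] (k : ℕ) (hk : 2 ≤ k) (G : FinHypergraph α)
    (hgood : G.Good) (hconn : G.Connected) (hunif : G.Uniform k)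
    (hsize : 1 ≤ G.edges.card) (u : α) (hu : u ∈ G.verts)
    (p q : ℕ) (hq : 1 ≤ q) (hpq : q ≤ p) :
    (attachTwoPaths k G u p q).trans < (attachTwoPaths k G u (p + 1) (q - 1)).trans := by
  obtain ⟨n, rfl⟩ : ∃ n, k = n + 1 := ⟨k - 1, by omega⟩
  have hn : 0 < n := by omega
  obtain ⟨e, he⟩ := card_pos.1 (by omega : 0 < G.edges.card)
  have hcard : n + 1 ≤ #G.verts := hunif e he ▸ card_le_card (hgood e he)
  obtain ⟨N, hN⟩ : ∃ N, #G.verts = N + 1 := ⟨#G.verts - 1, by omega⟩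
  have hm : p + 1 + (q - 1) = p + q := by omega
  have hverts : (attachTwoPaths (n + 1) G u (p + 1) (q - 1)).verts =
      (attachTwoPaths (n + 1) G u p q).verts := by
    rw [verts_attachTwoPaths, verts_attachTwoPaths, hm]
  have hT := pathTransFrom_lt_succ_mul (M := p + q) (a := p) hn (by omega) (by omega)
  have := Nat.mul_lt_mul_of_pos_left hT (show 0 < N by omega)
  unfold FinHypergraph.trans
  rw [sum_dist_attachTwoPaths hn hgood hconn hu hN, sum_dist_attachTwoPaths hn hgood hconn hu hN,
    hverts, hm]
  omega
end

section
/- In the k-uniform hypergraph C̃^k_2(p,q) with q ≥ 1, let f_q be the last edge of the pendant path of length q attached at w'_1, with v_{q−1} the vertex of f_q closest to the cycle, and let U = V(G)∖(f_q∖{v_{q−1}}). Then σ_G(f_q∖{v_{q−1}}, U) = (k−1)[ q(q+1)/2 + p(p+2q+5)/2 + (k−2)(p²+q²+2pq+5p+q−2)/2 + (2k−3)(q+1) + k−2 ]. -/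
open Finset

open FinHypergraph

/-!
For `a ∈ A` the distance `d(a, ·)` is guessed explicitly: outside `A` it is `1 + d(v_{q-1}, ·)`,
and `d(v_{q-1}, ·)` is read off the layout of `C̃^k_2(p,q)`. A guess that vanishes only at `a`,
changes by at most one inside every edge and can always be lowered by one along an edge is the
distance from `a`. The vertices outside `A` come in blocks of `k - 1` on which the guess is
(almost) constant, and summing over the blocks gives the closed form.
-/

namespace FinHypergraph

variable {α : Type} {G : FinHypergraph α}

theorem Walk.snoc {u v w : α} {n : ℕ} {e : Finset α} (h : G.Walk u v n) (he : e ∈ G.edges)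
    (hv : v ∈ e) (hw : w ∈ e) (hvw : v ≠ w) : G.Walk u w (n + 1) := by
  induction h with
  | nil => exact .cons w e he hv hw hvw (.nil w)
  | cons x f hf hu hx hne _ ih => exact .cons x f hf hu hx hne (ih hv hvw)

def EdgeLipschitz (G : FinHypergraph α) (Φ : α → ℕ) : Prop :=
  ∀ e ∈ G.edges, ∀ x ∈ e, ∀ y ∈ e, Φ x ≤ Φ y + 1

theorem edgeLipschitz_of_exists_band {Φ : α → ℕ}
    (h : ∀ e ∈ G.edges, ∃ L, ∀ z ∈ e, L ≤ Φ z ∧ Φ z ≤ L + 1) : G.EdgeLipschitz Φ := by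
  intro e he x hx y hy
  obtain ⟨L, hL⟩ := h e he
  have := hL x hx
  have := hL y hy
  omega

theorem Walk.le_add_of_edgeLipschitz {Φ : α → ℕ} (hΦ : G.EdgeLipschitz Φ) {u v : α} {n : ℕ}
    (h : G.Walk u v n) : Φ v ≤ Φ u + n := by
  induction h with
  | nil => simp
  | cons x e he hu hx _ _ ih =>
    have := hΦ e he x hx _ hu
    omega

theorem dist_eq_of_potential {Φ : α → ℕ} {a : α} {S : Set α} (hΦ : G.EdgeLipschitz Φ)
    (ha : Φ a = 0) (hzero : ∀ u ∈ S, Φ u = 0 → u = a)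
    (hstep : ∀ u ∈ S, Φ u ≠ 0 → ∃ y ∈ S, Φ y + 1 = Φ u ∧ ∃ e ∈ G.edges, y ∈ e ∧ u ∈ e)
    {u : α} (hu : u ∈ S) : G.dist a u = Φ u := by
  have hwalk : ∀ n, ∀ u ∈ S, Φ u = n → G.Walk a u n := by
    intro n
    induction n with
    | zero => intro u hu h0; rw [hzero u hu h0]; exact .nil a
    | succ n ih =>
      intro u hu hn
      obtain ⟨y, hyS, hy, e, he, hye, hue⟩ := hstep u hu (by omega)
      exact (ih y hyS (by omega)).snoc he hye hue (by rintro rfl; omega)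
  have hw := hwalk _ u hu rfl
  refine le_antisymm (Nat.sInf_le hw) ?_
  have hmin : G.Walk a u (G.dist a u) := Nat.sInf_mem ⟨_, hw⟩
  have := hmin.le_add_of_edgeLipschitz hΦ
  omega

end FinHypergraph

theorem Nat.exists_block_of_lt_add_mul {s x n m : ℕ} (hs : s ≤ x) (hx : x < s + n * m) :
    ∃ i < n, s + i * m ≤ x ∧ x < s + (i + 1) * m := by
  have hm : 0 < m := Nat.pos_of_ne_zero (by rintro rfl; omega)
  refine ⟨(x - s) / m, (Nat.div_lt_iff_lt_mul hm).2 (by omega), ?_, ?_⟩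
  · have := Nat.div_mul_le_self (x - s) m
    omega
  · have := Nat.lt_div_mul_add (a := x - s) hm
    rw [add_one_mul]
    omega

theorem Finset.sum_Ico_add_mul_eq_sum_range {M : Type*} [AddCommMonoid M] (f : ℕ → M)
    (s m n : ℕ) :
    ∑ x ∈ Ico s (s + n * m), f x =
      ∑ i ∈ range n, ∑ x ∈ Ico (s + i * m) (s + (i + 1) * m), f x := by
  induction n with
  | zero => simp
  | succ n ih =>
    rw [sum_range_succ, ← ih, sum_Ico_consecutive _ (by omega) (by rw [add_one_mul]; omega)]

theorem Finset.sum_range_eq_of_affine {f : ℕ → ℝ} {a b : ℝ} (hf : ∀ i, f i = a + b * i)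
    (n : ℕ) : ∑ i ∈ range n, f i = n * a + b * (n * (n - 1) / 2) := by
  induction n with
  | zero => simp
  | succ n ih => rw [sum_range_succ, ih, hf]; push_cast; ring

namespace FinHypergraph.Ctilde

/-! Vertex `2` is `w_1 = u_0`, vertex `k` is `w'_1 = v_0`; the `i`-th edge of the `p`-path is
`{u_i} ∪ pBlock k i` and the `j`-th edge of the `q`-path is `{v_j} ∪ qBlock k p j` (both
`0`-based), the last vertex of each block being the next joint. -/

def pBlock (k i : ℕ) : Finset ℕ :=
  Ico (2 * k - 2 + i * (k - 1)) (2 * k - 2 + (i + 1) * (k - 1))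

def qBlock (k p j : ℕ) : Finset ℕ :=
  Ico (2 * k - 2 + p * (k - 1) + j * (k - 1)) (2 * k - 2 + p * (k - 1) + (j + 1) * (k - 1))

def pJoint (k i : ℕ) : ℕ := if i = 0 then 2 else 2 * k - 2 + i * (k - 1) - 1

def qJoint (k p j : ℕ) : ℕ := if j = 0 then k else 2 * k - 2 + p * (k - 1) + j * (k - 1) - 1

def edgeE (k : ℕ) : Finset ℕ := range k

def edgeF (k : ℕ) : Finset ℕ := insert 0 (insert 1 (Ico k (2 * k - 2)))

def edgeP (k i : ℕ) : Finset ℕ := insert (pJoint k i) (pBlock k i)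

def edgeQ (k p j : ℕ) : Finset ℕ := insert (qJoint k p j) (qBlock k p j)

variable {k p q i j a x : ℕ}

theorem mem_edges {e : Finset ℕ} :
    e ∈ (Ctilde k p q).edges ↔
      e = edgeE k ∨ e = edgeF k ∨ (∃ i < p, edgeP k i = e) ∨ ∃ j < q, edgeQ k p j = e := by
  have : (Ctilde k p q).edges =
      {edgeE k, edgeF k} ∪ (range p).image (edgeP k) ∪ (range q).image (edgeQ k p) := rfl
  simp only [this, mem_union, mem_insert, mem_singleton, mem_image, mem_range, or_assoc]

theorem edgeE_mem_edges : edgeE k ∈ (Ctilde k p q).edges := mem_edges.2 (.inl rfl)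

theorem edgeF_mem_edges : edgeF k ∈ (Ctilde k p q).edges := mem_edges.2 (.inr (.inl rfl))

theorem edgeP_mem_edges (hi : i < p) : edgeP k i ∈ (Ctilde k p q).edges :=
  mem_edges.2 (.inr (.inr (.inl ⟨i, hi, rfl⟩)))

theorem edgeQ_mem_edges (hj : j < q) : edgeQ k p j ∈ (Ctilde k p q).edges :=
  mem_edges.2 (.inr (.inr (.inr ⟨j, hj, rfl⟩)))

theorem verts_eq (hk : 1 ≤ k) :
    (Ctilde k p q).verts = range (2 * k - 2 + p * (k - 1) + q * (k - 1)) := by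
  have : (p + q + 2) * (k - 1) = p * (k - 1) + q * (k - 1) + 2 * (k - 1) := by ring
  simp only [Ctilde, this]
  congr 1
  omega

theorem pJoint_succ_mem_pBlock (hk : 2 ≤ k) : pJoint k (i + 1) ∈ pBlock k i := by
  simp only [pJoint, pBlock, mem_Ico, add_one_mul, Nat.add_one_ne_zero, if_false]
  omega

theorem qJoint_succ_mem_qBlock (hk : 2 ≤ k) : qJoint k p (j + 1) ∈ qBlock k p j := by
  simp only [qJoint, qBlock, mem_Ico, add_one_mul, Nat.add_one_ne_zero, if_false]
  omega

/-- The distance from `v_{q-1}` to `x`, for `x` outside the last edge. On the `q`-path, shifting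
by one makes the last vertex of block `j` (the joint `v_{j+1}`) count as block `j + 1`. -/
def jointDist (k p q x : ℕ) : ℕ :=
  if x < 2 then q
  else if x < k then q + 1
  else if x = k then q - 1
  else if x < 2 * k - 2 then q
  else if x < 2 * k - 2 + p * (k - 1) then q + 2 + (x - (2 * k - 2)) / (k - 1)
  else q - 1 - (x - (2 * k - 2 + p * (k - 1)) + 1) / (k - 1)

theorem jointDist_of_lt_two (hx : x < 2) : jointDist k p q x = q := by
  simp [jointDist, hx]

theorem jointDist_of_two_le_of_lt (h₁ : 2 ≤ x) (h₂ : x < k) : jointDist k p q x = q + 1 := by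
  simp [jointDist, h₂, show ¬x < 2 by omega]

theorem jointDist_of_lt_of_lt (h₁ : k < x) (h₂ : x < 2 * k - 2) : jointDist k p q x = q := by
  simp [jointDist, h₂, show ¬x < 2 by omega, show ¬x < k by omega, show x ≠ k by omega]

theorem jointDist_of_mem_pBlock (hk : 3 ≤ k) (hi : i < p) (hx : x ∈ pBlock k i) :
    jointDist k p q x = q + 2 + i := by
  have hip : (i + 1) * (k - 1) ≤ p * (k - 1) := Nat.mul_le_mul_right _ hi
  rw [pBlock, mem_Ico] at hx
  unfold jointDist
  rw [if_neg (by omega), if_neg (by omega), if_neg (by omega), if_neg (by omega),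
    if_pos (by omega), Nat.div_eq_of_lt_le (k := i) (by omega) (by omega)]

theorem jointDist_pJoint (hk : 3 ≤ k) (hi : i ≤ p) : jointDist k p q (pJoint k i) = q + 1 + i := by
  cases i with
  | zero => simp [pJoint, jointDist_of_two_le_of_lt le_rfl (show 2 < k by omega)]
  | succ i =>
    rw [jointDist_of_mem_pBlock hk hi (pJoint_succ_mem_pBlock (by omega))]
    ring

theorem jointDist_of_qBlock_le (hk : 3 ≤ k) (hx : 2 * k - 2 + p * (k - 1) ≤ x) :
    jointDist k p q x = q - 1 - (x - (2 * k - 2 + p * (k - 1)) + 1) / (k - 1) := by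
  unfold jointDist
  rw [if_neg (by omega), if_neg (by omega), if_neg (by omega), if_neg (by omega),
    if_neg (by omega)]

theorem jointDist_of_mem_qBlock (hk : 3 ≤ k) (hx : x ∈ qBlock k p j)
    (hx' : x + 1 < 2 * k - 2 + p * (k - 1) + (j + 1) * (k - 1)) :
    jointDist k p q x = q - 1 - j := by
  rw [qBlock, mem_Ico] at hx
  rw [jointDist_of_qBlock_le hk (by omega),
    Nat.div_eq_of_lt_le (k := j) (by omega) (by omega)]

theorem jointDist_qJoint (hk : 3 ≤ k) : jointDist k p q (qJoint k p j) = q - 1 - j := by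
  cases j with
  | zero =>
    rw [show qJoint k p 0 = k from rfl, jointDist, if_neg (by omega), if_neg (by omega),
      if_pos rfl, Nat.sub_zero]
  | succ j =>
    have hx := qJoint_succ_mem_qBlock (k := k) (p := p) (j := j) (by omega)
    have hjoint : qJoint k p (j + 1) = 2 * k - 2 + p * (k - 1) + (j + 1) * (k - 1) - 1 := rfl
    rw [qBlock, mem_Ico] at hx
    rw [jointDist_of_qBlock_le hk (by omega),
      show qJoint k p (j + 1) - (2 * k - 2 + p * (k - 1)) + 1 = (j + 1) * (k - 1) by omega,
      Nat.mul_div_cancel _ (by omega)]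

theorem mem_edgeF : x ∈ edgeF k ↔ x < 2 ∨ k ≤ x ∧ x < 2 * k - 2 := by
  simp only [edgeF, mem_insert, mem_Ico]
  omega

theorem pJoint_lt (hk : 3 ≤ k) (hi : i ≤ p) : pJoint k i < 2 * k - 2 + p * (k - 1) := by
  have := Nat.mul_le_mul_right (k - 1) hi
  unfold pJoint
  split_ifs <;> omega

theorem lt_of_mem_pBlock (hi : i < p) (hx : x ∈ pBlock k i) : x < 2 * k - 2 + p * (k - 1) := by
  have := Nat.mul_le_mul_right (k - 1) (show i + 1 ≤ p from hi)
  rw [pBlock, mem_Ico] at hx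
  omega

theorem lt_of_mem_qBlock (hj : j + 1 < q) (hx : x ∈ qBlock k p j) :
    x < 2 * k - 2 + p * (k - 1) + (q - 1) * (k - 1) := by
  have := Nat.mul_le_mul_right (k - 1) (show j + 1 ≤ q - 1 by omega)
  rw [qBlock, mem_Ico] at hx
  omega

theorem qJoint_lt (hk : 3 ≤ k) (hj : j < q) :
    qJoint k p j < 2 * k - 2 + p * (k - 1) + (q - 1) * (k - 1) := by
  cases j with
  | zero => simp only [qJoint, if_true]; omega
  | succ j => exact lt_of_mem_qBlock (by omega) (qJoint_succ_mem_qBlock (by omega))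

theorem lt_lastBlock_cases (hk : 3 ≤ k) (hq : 1 ≤ q)
    (hx : x < 2 * k - 2 + p * (k - 1) + (q - 1) * (k - 1)) :
    x < 2 ∨ (2 ≤ x ∧ x < k) ∨ (k < x ∧ x < 2 * k - 2) ∨ (∃ i < p, x ∈ pBlock k i) ∨
      (∃ j < q, x = qJoint k p j) ∨
      ∃ j, j + 1 < q ∧ x ∈ qBlock k p j ∧
        x + 1 < 2 * k - 2 + p * (k - 1) + (j + 1) * (k - 1) := by
  rcases lt_or_ge x (2 * k - 2) with hcyc | hcyc
  · rcases lt_trichotomy x k with h | rfl | h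
    · rcases lt_or_ge x 2 with h' | h'
      · exact .inl h'
      · exact .inr (.inl ⟨h', h⟩)
    · exact .inr (.inr (.inr (.inr (.inl ⟨0, hq, rfl⟩))))
    · exact .inr (.inr (.inl ⟨h, hcyc⟩))
  rcases lt_or_ge x (2 * k - 2 + p * (k - 1)) with hp | hp
  · obtain ⟨i, hi, h₁, h₂⟩ := Nat.exists_block_of_lt_add_mul hcyc hp
    exact .inr (.inr (.inr (.inl ⟨i, hi, mem_Ico.2 ⟨h₁, h₂⟩⟩)))
  obtain ⟨j, hj, h₁, h₂⟩ := Nat.exists_block_of_lt_add_mul hp hx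
  rcases lt_or_ge (x + 1) (2 * k - 2 + p * (k - 1) + (j + 1) * (k - 1)) with h | h
  · exact .inr (.inr (.inr (.inr (.inr ⟨j, by omega, mem_Ico.2 ⟨h₁, h₂⟩, h⟩))))
  · refine .inr (.inr (.inr (.inr (.inl ⟨j + 1, by omega, ?_⟩))))
    simp only [qJoint, Nat.add_one_ne_zero, if_false]
    omega

theorem eq_qJoint_of_jointDist_eq_zero (hk : 3 ≤ k) (hq : 1 ≤ q)
    (hx : x < 2 * k - 2 + p * (k - 1) + (q - 1) * (k - 1)) (h : jointDist k p q x = 0) :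
    x = qJoint k p (q - 1) := by
  rcases lt_lastBlock_cases hk hq hx with
    hx | ⟨h₁, h₂⟩ | ⟨h₁, h₂⟩ | ⟨i, hi, hxi⟩ | ⟨j, hj, rfl⟩ | ⟨j, hj, hxj, hx'⟩
  · rw [jointDist_of_lt_two hx] at h; omega
  · rw [jointDist_of_two_le_of_lt h₁ h₂] at h; omega
  · rw [jointDist_of_lt_of_lt h₁ h₂] at h; omega
  · rw [jointDist_of_mem_pBlock hk hi hxi] at h; omega
  · rw [jointDist_qJoint hk] at h; rw [show j = q - 1 by omega]
  · rw [jointDist_of_mem_qBlock hk hxj hx'] at h; omega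

theorem exists_jointDist_step (hk : 3 ≤ k) (hq : 1 ≤ q)
    (hx : x < 2 * k - 2 + p * (k - 1) + (q - 1) * (k - 1)) (h : jointDist k p q x ≠ 0) :
    ∃ y < 2 * k - 2 + p * (k - 1) + (q - 1) * (k - 1),
      jointDist k p q y + 1 = jointDist k p q x ∧
      ∃ e ∈ (Ctilde k p q).edges, y ∈ e ∧ x ∈ e := by
  have hk_mem : qJoint k p 0 ∈ edgeF k := mem_edgeF.2 (.inr ⟨le_rfl, by simp [qJoint]; omega⟩)
  rcases lt_lastBlock_cases hk hq hx with
    hx | ⟨h₁, h₂⟩ | ⟨h₁, h₂⟩ | ⟨i, hi, hxi⟩ | ⟨j, hj, rfl⟩ | ⟨j, hj, hxj, hx'⟩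
  · refine ⟨qJoint k p 0, qJoint_lt hk hq, ?_, edgeF k, edgeF_mem_edges, hk_mem,
      mem_edgeF.2 (.inl hx)⟩
    rw [jointDist_qJoint hk, jointDist_of_lt_two hx]
    omega
  · refine ⟨0, by omega, ?_, edgeE k, edgeE_mem_edges, mem_range.2 (by omega), mem_range.2 h₂⟩
    rw [jointDist_of_lt_two (by omega), jointDist_of_two_le_of_lt h₁ h₂]
  · refine ⟨qJoint k p 0, qJoint_lt hk hq, ?_, edgeF k, edgeF_mem_edges, hk_mem,
      mem_edgeF.2 (.inr ⟨h₁.le, h₂⟩)⟩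
    rw [jointDist_qJoint hk, jointDist_of_lt_of_lt h₁ h₂]
    omega
  · refine ⟨pJoint k i, by have := pJoint_lt hk hi.le; omega, ?_, edgeP k i,
      edgeP_mem_edges hi, mem_insert_self _ _, mem_insert_of_mem hxi⟩
    rw [jointDist_pJoint hk hi.le, jointDist_of_mem_pBlock hk hi hxi]
    ring
  · rw [jointDist_qJoint hk] at h
    refine ⟨qJoint k p (j + 1), qJoint_lt hk (by omega), ?_, edgeQ k p j, edgeQ_mem_edges hj,
      mem_insert_of_mem (qJoint_succ_mem_qBlock (by omega)), mem_insert_self _ _⟩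
    rw [jointDist_qJoint hk, jointDist_qJoint hk]
    omega
  · refine ⟨qJoint k p (j + 1), qJoint_lt hk hj, ?_, edgeQ k p j, edgeQ_mem_edges (by omega),
      mem_insert_of_mem (qJoint_succ_mem_qBlock (by omega)), mem_insert_of_mem hxj⟩
    rw [jointDist_qJoint hk, jointDist_of_mem_qBlock hk hxj hx']
    omega

theorem jointDist_self (hk : 3 ≤ k) : jointDist k p q k = q - 1 :=
  jointDist_qJoint (j := 0) hk

theorem band_edgeE (hk : 3 ≤ k) :
    ∀ z ∈ edgeE k, z < 2 * k - 2 + p * (k - 1) + (q - 1) * (k - 1) ∧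
      q ≤ jointDist k p q z ∧ jointDist k p q z ≤ q + 1 := by
  intro z hz
  rw [edgeE, mem_range] at hz
  refine ⟨by omega, ?_⟩
  rcases lt_or_ge z 2 with h | h
  · rw [jointDist_of_lt_two h]; omega
  · rw [jointDist_of_two_le_of_lt h hz]; omega

theorem band_edgeF (hk : 3 ≤ k) (hq : 1 ≤ q) :
    ∀ z ∈ edgeF k, z < 2 * k - 2 + p * (k - 1) + (q - 1) * (k - 1) ∧
      q - 1 ≤ jointDist k p q z ∧ jointDist k p q z ≤ q - 1 + 1 := by
  intro z hz
  rcases mem_edgeF.1 hz with h | ⟨h₁, h₂⟩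
  · rw [jointDist_of_lt_two h]; omega
  rcases h₁.eq_or_lt with h | h₁
  · rw [← h, jointDist_self hk]; omega
  · rw [jointDist_of_lt_of_lt h₁ h₂]; omega

theorem band_edgeP (hk : 3 ≤ k) (hi : i < p) :
    ∀ z ∈ edgeP k i, z < 2 * k - 2 + p * (k - 1) + (q - 1) * (k - 1) ∧
      q + 1 + i ≤ jointDist k p q z ∧ jointDist k p q z ≤ q + 1 + i + 1 := by
  intro z hz
  rcases mem_insert.1 hz with rfl | hz
  · have := pJoint_lt hk hi.le
    rw [jointDist_pJoint hk hi.le]; omega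
  · have := lt_of_mem_pBlock hi hz
    rw [jointDist_of_mem_pBlock hk hi hz]; omega

theorem band_edgeQ (hk : 3 ≤ k) (hj : j + 1 < q) :
    ∀ z ∈ edgeQ k p j, z < 2 * k - 2 + p * (k - 1) + (q - 1) * (k - 1) ∧
      q - 2 - j ≤ jointDist k p q z ∧ jointDist k p q z ≤ q - 2 - j + 1 := by
  intro z hz
  rcases mem_insert.1 hz with rfl | hz
  · refine ⟨qJoint_lt hk (by omega), ?_⟩
    rw [jointDist_qJoint hk]; omega
  refine ⟨lt_of_mem_qBlock hj hz, ?_⟩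
  rcases lt_or_ge (z + 1) (2 * k - 2 + p * (k - 1) + (j + 1) * (k - 1)) with h | h
  · rw [jointDist_of_mem_qBlock hk hz h]; omega
  · have : z = qJoint k p (j + 1) := by
      rw [qBlock, mem_Ico] at hz
      simp only [qJoint, Nat.add_one_ne_zero, if_false]
      omega
    rw [this, jointDist_qJoint hk]; omega

theorem exists_band_jointDist (hk : 3 ≤ k) (hq : 1 ≤ q) {e : Finset ℕ}
    (he : e ∈ (Ctilde k p q).edges) (hlast : e ≠ edgeQ k p (q - 1)) :
    ∃ L, ∀ z ∈ e, z < 2 * k - 2 + p * (k - 1) + (q - 1) * (k - 1) ∧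
      L ≤ jointDist k p q z ∧ jointDist k p q z ≤ L + 1 := by
  rcases mem_edges.1 he with rfl | rfl | ⟨i, hi, rfl⟩ | ⟨j, hj, rfl⟩
  · exact ⟨_, band_edgeE hk⟩
  · exact ⟨_, band_edgeF hk hq⟩
  · exact ⟨_, band_edgeP hk hi⟩
  · refine ⟨_, band_edgeQ hk ?_⟩
    by_contra h
    exact hlast (by rw [show j = q - 1 by omega])

/-- The distance from a vertex `a` of `A`: the rest of `A` is adjacent to `a`, and every other
vertex is reached through `v_{q-1}`. -/
def lastEdgeDist (k p q a x : ℕ) : ℕ :=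
  if x = a then 0
  else if 2 * k - 2 + p * (k - 1) + (q - 1) * (k - 1) ≤ x then 1
  else 1 + jointDist k p q x

theorem lastEdgeDist_of_lt (ha : 2 * k - 2 + p * (k - 1) + (q - 1) * (k - 1) ≤ a)
    (hx : x < 2 * k - 2 + p * (k - 1) + (q - 1) * (k - 1)) :
    lastEdgeDist k p q a x = 1 + jointDist k p q x := by
  rw [lastEdgeDist, if_neg (by omega), if_neg (by omega)]

theorem edgeLipschitz_lastEdgeDist (hk : 3 ≤ k) (hq : 1 ≤ q)
    (ha : 2 * k - 2 + p * (k - 1) + (q - 1) * (k - 1) ≤ a) :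
    (Ctilde k p q).EdgeLipschitz (lastEdgeDist k p q a) := by
  refine edgeLipschitz_of_exists_band fun e he => ?_
  by_cases hlast : e = edgeQ k p (q - 1)
  · refine ⟨0, fun z hz => ⟨Nat.zero_le _, ?_⟩⟩
    rw [hlast] at hz
    rcases mem_insert.1 hz with rfl | hz
    · rw [lastEdgeDist_of_lt ha (qJoint_lt hk (by omega)), jointDist_qJoint hk]
      omega
    · rw [qBlock, mem_Ico] at hz
      unfold lastEdgeDist
      split_ifs <;> omega
  · obtain ⟨L, hL⟩ := exists_band_jointDist hk hq he hlast
    refine ⟨L + 1, fun z hz => ?_⟩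
    obtain ⟨hz, h₁, h₂⟩ := hL z hz
    rw [lastEdgeDist_of_lt ha hz]
    omega

theorem dist_eq_one_add_jointDist (hk : 3 ≤ k) (hq : 1 ≤ q)
    (ha₁ : 2 * k - 2 + p * (k - 1) + (q - 1) * (k - 1) ≤ a)
    (ha₂ : a < 2 * k - 2 + p * (k - 1) + q * (k - 1))
    (hx : x < 2 * k - 2 + p * (k - 1) + (q - 1) * (k - 1)) :
    (Ctilde k p q).dist a x = 1 + jointDist k p q x := by
  have hlast : edgeQ k p (q - 1) ∈ (Ctilde k p q).edges := edgeQ_mem_edges (by omega)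
  have hA : ∀ u, 2 * k - 2 + p * (k - 1) + (q - 1) * (k - 1) ≤ u →
      u < 2 * k - 2 + p * (k - 1) + q * (k - 1) → u ∈ edgeQ k p (q - 1) := by
    intro u h₁ h₂
    rw [edgeQ, qBlock, Nat.sub_add_cancel hq]
    exact mem_insert_of_mem (mem_Ico.2 ⟨h₁, h₂⟩)
  rw [← lastEdgeDist_of_lt ha₁ hx]
  refine dist_eq_of_potential (S := {x | x < 2 * k - 2 + p * (k - 1) + q * (k - 1)})
    (edgeLipschitz_lastEdgeDist hk hq ha₁) (by simp [lastEdgeDist]) ?_ ?_ (show x < _ by omega)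
  · intro u _ hu
    unfold lastEdgeDist at hu
    split_ifs at hu <;> omega
  intro u (hu : u < _) h0
  by_cases huA : 2 * k - 2 + p * (k - 1) + (q - 1) * (k - 1) ≤ u
  · refine ⟨a, ha₂, ?_, _, hlast, hA a ha₁ ha₂, hA u huA hu⟩
    unfold lastEdgeDist at h0 ⊢
    split_ifs at h0 ⊢ <;> omega
  rw [lastEdgeDist_of_lt (x := u) ha₁ (by omega)]
  by_cases hjoint : jointDist k p q u = 0
  · refine ⟨a, ha₂, by simp [lastEdgeDist, hjoint], _, hlast, hA a ha₁ ha₂, ?_⟩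
    rw [eq_qJoint_of_jointDist_eq_zero hk hq (by omega) hjoint]
    exact mem_insert_self _ _
  obtain ⟨y, hy, hstep, e, he, hye, hue⟩ := exists_jointDist_step hk hq (by omega) hjoint
  refine ⟨y, show y < _ by omega, ?_, e, he, hye, hue⟩
  rw [lastEdgeDist_of_lt ha₁ hy]
  omega

theorem sum_cycle (hk : 3 ≤ k) (hq : 1 ≤ q) :
    ∑ x ∈ range (2 * k - 2), (1 + jointDist k p q x) = (2 * k - 2) * (q + 1) + (k - 3) := by
  rw [range_eq_Ico, ← sum_Ico_consecutive _ (Nat.zero_le 2) (by omega : 2 ≤ 2 * k - 2),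
    ← sum_Ico_consecutive _ (by omega : 2 ≤ k) (by omega : k ≤ 2 * k - 2),
    sum_eq_sum_Ico_succ_bot (by omega : k < 2 * k - 2), jointDist_self hk,
    sum_const_nat (m := q + 1) fun x hx => by rw [jointDist_of_lt_two (mem_Ico.1 hx).2]; ring,
    sum_const_nat (m := q + 2) fun x hx => by
      rw [jointDist_of_two_le_of_lt (mem_Ico.1 hx).1 (mem_Ico.1 hx).2]; ring,
    sum_const_nat (m := q + 1) fun x hx => by
      rw [jointDist_of_lt_of_lt (mem_Ico.1 hx).1 (mem_Ico.1 hx).2]; ring,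
    Nat.card_Ico, Nat.card_Ico, Nat.card_Ico]
  obtain ⟨t, rfl⟩ : ∃ t, k = t + 3 := ⟨k - 3, by omega⟩
  obtain ⟨r, rfl⟩ : ∃ r, q = r + 1 := ⟨q - 1, by omega⟩
  rw [show 2 * (t + 3) - 2 = 2 * t + 4 by omega, show 2 * t + 4 - (t + 3 + 1) = t by omega,
    show t + 3 - 2 = t + 1 by omega, Nat.add_sub_cancel, Nat.add_sub_cancel]
  ring

theorem sum_pBlock (hk : 3 ≤ k) (hi : i < p) :
    ∑ x ∈ pBlock k i, (1 + jointDist k p q x) = (k - 1) * (q + 3 + i) := by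
  rw [sum_const_nat (m := q + 3 + i) fun x hx => by
      rw [jointDist_of_mem_pBlock hk hi hx]; ring,
    pBlock, Nat.card_Ico, add_one_mul]
  congr 1
  omega

theorem sum_qBlock (hk : 3 ≤ k) (hj : j + 1 < q) :
    ∑ x ∈ qBlock k p j, (1 + jointDist k p q x) + 1 = (k - 1) * (q - j) := by
  have hjoint : qJoint k p (j + 1) = 2 * k - 2 + p * (k - 1) + (j + 1) * (k - 1) - 1 := rfl
  have hstart : 2 * k - 2 + p * (k - 1) + j * (k - 1) ≤ qJoint k p (j + 1) := by
    rw [hjoint, add_one_mul]; omega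
  have hleaves : ∀ x ∈ Ico (2 * k - 2 + p * (k - 1) + j * (k - 1)) (qJoint k p (j + 1)),
      1 + jointDist k p q x = q - j := by
    intro x hx
    rw [mem_Ico] at hx
    rw [jointDist_of_mem_qBlock hk (mem_Ico.2 ⟨hx.1, by omega⟩) (by omega)]
    omega
  rw [qBlock, show 2 * k - 2 + p * (k - 1) + (j + 1) * (k - 1) = qJoint k p (j + 1) + 1 by
      rw [hjoint, add_one_mul]; omega,
    sum_Ico_succ_top hstart, sum_const_nat hleaves, jointDist_qJoint hk, Nat.card_Ico,
    add_assoc, show 1 + (q - 1 - (j + 1)) + 1 = q - j by omega,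
    show qJoint k p (j + 1) - (2 * k - 2 + p * (k - 1) + j * (k - 1)) = k - 2 by
      rw [hjoint, add_one_mul]; omega,
    ← add_one_mul]
  congr 1
  omega

theorem transBetween_lastBlock (hk : 3 ≤ k) (hq : 1 ≤ q) :
    (Ctilde k p q).transBetween
        (Ico (2 * k - 2 + p * (k - 1) + (q - 1) * (k - 1)) (2 * k - 2 + p * (k - 1) + q * (k - 1)))
        ((Ctilde k p q).verts \
          Ico (2 * k - 2 + p * (k - 1) + (q - 1) * (k - 1)) (2 * k - 2 + p * (k - 1) + q * (k - 1)))
      = (k - 1) * ∑ x ∈ range (2 * k - 2 + p * (k - 1) + (q - 1) * (k - 1)),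
          (1 + jointDist k p q x) := by
  have hlast : q * (k - 1) = (q - 1) * (k - 1) + (k - 1) := by
    rw [← add_one_mul, Nat.sub_add_cancel hq]
  have hrest : (Ctilde k p q).verts \
      Ico (2 * k - 2 + p * (k - 1) + (q - 1) * (k - 1)) (2 * k - 2 + p * (k - 1) + q * (k - 1))
        = range (2 * k - 2 + p * (k - 1) + (q - 1) * (k - 1)) := by
    rw [verts_eq (by omega)]
    ext x
    simp only [mem_sdiff, mem_range, mem_Ico]
    omega
  rw [transBetween, hrest, sum_congr rfl fun a ha => sum_congr rfl fun x hx =>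
      dist_eq_one_add_jointDist hk hq (mem_Ico.1 ha).1 (mem_Ico.1 ha).2 (mem_range.1 hx),
    sum_const, Nat.card_Ico, smul_eq_mul]
  congr 1
  omega

theorem cast_sum_pPath (hk : 3 ≤ k) :
    ((∑ x ∈ Ico (2 * k - 2) (2 * k - 2 + p * (k - 1)), (1 + jointDist k p q x) : ℕ) : ℝ) =
      p * ((k - 1) * (q + 3)) + (k - 1) * (p * (p - 1) / 2) := by
  have hblock : ∀ i ∈ range p, ((∑ x ∈ pBlock k i, (1 + jointDist k p q x) : ℕ) : ℝ) =
      (k - 1) * (q + 3) + (k - 1) * i := by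
    intro i hi
    rw [sum_pBlock hk (mem_range.1 hi)]
    push_cast [Nat.cast_pred (by omega : 0 < k)]
    ring
  rw [sum_Ico_add_mul_eq_sum_range, Nat.cast_sum]
  exact (sum_congr rfl hblock).trans (sum_range_eq_of_affine (fun _ => rfl) p)

theorem cast_sum_qPath (hk : 3 ≤ k) (hq : 1 ≤ q) :
    ((∑ x ∈ Ico (2 * k - 2 + p * (k - 1)) (2 * k - 2 + p * (k - 1) + (q - 1) * (k - 1)),
      (1 + jointDist k p q x) : ℕ) : ℝ) =
        (q - 1) * ((k - 1) * q - 1) - (k - 1) * ((q - 1) * (q - 2) / 2) := by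
  have hblock : ∀ j ∈ range (q - 1), ((∑ x ∈ qBlock k p j, (1 + jointDist k p q x) : ℕ) : ℝ) =
      ((k - 1) * q - 1) + -(k - 1) * j := by
    intro j hj
    have hjq : j + 1 < q := by have := mem_range.1 hj; omega
    have h := congrArg (Nat.cast : ℕ → ℝ) (sum_qBlock hk (p := p) hjq)
    rw [Nat.cast_add, Nat.cast_one, Nat.cast_mul, Nat.cast_pred (by omega),
      Nat.cast_sub (by omega : j ≤ q)] at h
    linarith
  rw [sum_Ico_add_mul_eq_sum_range, Nat.cast_sum]
  refine ((sum_congr rfl hblock).trans (sum_range_eq_of_affine (fun _ => rfl) _)).trans ?_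
  rw [Nat.cast_pred hq]
  ring

theorem cast_sum_jointDist (hk : 3 ≤ k) (hq : 1 ≤ q) :
    ((∑ x ∈ range (2 * k - 2 + p * (k - 1) + (q - 1) * (k - 1)), (1 + jointDist k p q x) : ℕ)
        : ℝ) =
      (2 * k - 2) * (q + 1) + (k - 3) + (p * ((k - 1) * (q + 3)) + (k - 1) * (p * (p - 1) / 2))
        + ((q - 1) * ((k - 1) * q - 1) - (k - 1) * ((q - 1) * (q - 2) / 2)) := by
  rw [range_eq_Ico, ← sum_Ico_consecutive _ (Nat.zero_le _) (by omega : 2 * k - 2 ≤ _),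
    ← sum_Ico_consecutive _ (by omega : 2 * k - 2 ≤ 2 * k - 2 + p * (k - 1)) (by omega),
    ← range_eq_Ico, Nat.cast_add, Nat.cast_add, cast_sum_pPath hk, cast_sum_qPath hk hq,
    sum_cycle hk hq]
  push_cast [Nat.cast_sub (by omega : 2 ≤ 2 * k), Nat.cast_sub hk]
  ring

end FinHypergraph.Ctilde

/-- In `G = C̃^k_2(p,q)` with `q ≥ 1`, let `f_q` be the last edge of the
pendant path of length `q` and `v_{q-1}` its vertex closest to the cycle; with
`A = f_q \ {v_{q-1}}` and `U = V(G) \ A`,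
`σ_G(A, U) = (k-1)[q(q+1)/2 + p(p+2q+5)/2 + (k-2)(p²+q²+2pq+5p+q-2)/2 + (2k-3)(q+1) + k-2]`. -/
theorem stmt14 (k p q : ℕ) (hk : 3 ≤ k) (hq : 1 ≤ q) :
    let G := Ctilde k p q
    let A := Finset.Ico (2 * k - 2 + p * (k - 1) + (q - 1) * (k - 1))
      (2 * k - 2 + p * (k - 1) + q * (k - 1))
    let P : ℝ := p
    let Q : ℝ := q
    let K : ℝ := k
    (G.transBetween A (G.verts \ A) : ℝ) =
      (K - 1) * (Q * (Q + 1) / 2 + P * (P + 2 * Q + 5) / 2 +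
        (K - 2) * (P ^ 2 + Q ^ 2 + 2 * P * Q + 5 * P + Q - 2) / 2 +
        (2 * K - 3) * (Q + 1) + (K - 2)) := by
  intro G A P Q K
  rw [Ctilde.transBetween_lastBlock hk hq, Nat.cast_mul, Ctilde.cast_sum_jointDist hk hq,
    Nat.cast_sub (by omega : 1 ≤ k), Nat.cast_one]
  ring
end
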